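/- Fix p ≥ 0 and for d ≥ 1 let f_{d,p}(x) = (Σ_{j=1}^d x_j − (d−1))₊^p for x ∈ [0,1]^d (with f_{d,0}(x) = 1{Σ_{j=1}^d x_j > d−1}). Then the mean dimension of f_{d,p} with respect to X ~ U[0,1]^d satisfies lim_{d→∞} (d − ν(f_{d,p})) = (4p + 2)/(p + 1). -/

import Mathlib

/-!
Write `f_{d,p}(x) = g_p(∑ x_j - (d - 1))` with `g_q(y) = y₊^q`. For `a ≤ 0`, integrating
`g_q(a + t)` over `t ∈ [0,1]` gives `g_{q+1}(a + 1)/(q + 1)`, so integrating out the coordinates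
one at a time yields `E g_q(∑ X_j - (d - 1)) = ∏_{i<d} (q + i + 1)⁻¹ =: M_q(d)`.

The total index `τ̄²_j` is the expected variance of `f` in the `j`-th coordinate alone; with the
slice formula this gives `τ̄²_j = M_{2p}(d) - 2 M_{2p+1}(d)/(p + 1)`, while
`σ² = M_{2p}(d) - M_p(d)²`.
Since `M_{2p+1}(d)/M_{2p}(d) = (2p + 1)/(d + 2p + 1)` and `R_d = M_p(d)²/M_{2p}(d) ≤ 2^d/d!`,
`d - ν = ((4p + 2)/(p + 1) · d/(d + 2p + 1) - d R_d)/(1 - R_d) → (4p + 2)/(p + 1)`.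
-/

open MeasureTheory ProbabilityTheory Real Filter

noncomputable section

/-- Uniform measure on the cube `[0,1]^d`. -/
def unifCube (d : ℕ) : Measure (Fin d → ℝ) :=
  Measure.pi fun _ => (volume : Measure ℝ).restrict (Set.Icc 0 1)

/-- Sobol' total index `τ̄²_j(f) = (1/2)·E[(f(X) − f(X_{−j}:Z_j))²]`
for `X, Z` independent and uniform on `[0,1]^d`. -/
def sobolTauU (d : ℕ) (f : (Fin d → ℝ) → ℝ) (j : Fin d) : ℝ :=
  (1 / 2) * ∫ p : (Fin d → ℝ) × (Fin d → ℝ),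
    (f p.1 - f (Function.update p.1 j (p.2 j))) ^ 2
      ∂((unifCube d).prod (unifCube d))

/-- Mean dimension `ν(f) = (Σ_j τ̄²_j(f)) / Var(f(X))`. -/
def meanDimU (d : ℕ) (f : (Fin d → ℝ) → ℝ) : ℝ :=
  (∑ j, sobolTauU d f j) / variance f (unifCube d)

/-- The cusp function `f_{d,p}(x) = (Σ_j x_j − (d−1))₊^p`, with the
convention that `f_{d,0}` is the indicator `1{Σ_j x_j > d−1}`. -/
def fdp (d : ℕ) (p : ℝ) (x : Fin d → ℝ) : ℝ :=
  if p = 0 then (if (d : ℝ) - 1 < ∑ j, x j then 1 else 0)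
  else (max ((∑ j, x j) - ((d : ℝ) - 1)) 0) ^ p

namespace MeanDimCusp

lemma integral_sub_sq_prod_self {Ω : Type*} [MeasurableSpace Ω] {μ : Measure Ω}
    [IsProbabilityMeasure μ] {g : Ω → ℝ} (hg : MemLp g 2 μ) :
    ∫ z, (g z.1 - g z.2) ^ 2 ∂μ.prod μ = 2 * variance g μ := by
  have h1 : MemLp (fun z : Ω × Ω => g z.1) 2 (μ.prod μ) :=
    hg.comp_measurePreserving measurePreserving_fst
  have h2 : MemLp (fun z : Ω × Ω => g z.2) 2 (μ.prod μ) :=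
    hg.comp_measurePreserving measurePreserving_snd
  have hcross : Integrable (fun z : Ω × Ω => g z.1 * g z.2) (μ.prod μ) := h1.integrable_mul h2
  have hexpand (z : Ω × Ω) :
      (g z.1 - g z.2) ^ 2 = g z.1 ^ 2 + g z.2 ^ 2 - 2 * (g z.1 * g z.2) := by
    ring
  simp_rw [hexpand]
  rw [integral_sub (h1.integrable_sq.fun_add h2.integrable_sq) (hcross.const_mul 2),
    integral_add h1.integrable_sq h2.integrable_sq, integral_const_mul, integral_prod_mul,
    integral_fun_fst (fun x => g x ^ 2), integral_fun_snd (fun x => g x ^ 2),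
    variance_eq_sub hg]
  simp only [probReal_univ, one_smul, Pi.pow_apply]
  ring

-- Not `max y 0 ^ q`: with `0 ^ 0 = 1` that would miss the indicator convention for `f_{d,0}`.
def cusp (q y : ℝ) : ℝ := if 0 < y then y ^ q else 0

lemma cusp_of_nonpos {q y : ℝ} (hy : y ≤ 0) : cusp q y = 0 := if_neg hy.not_gt

lemma cusp_of_pos {q y : ℝ} (hy : 0 < y) : cusp q y = y ^ q := if_pos hy

lemma cusp_nonneg (q y : ℝ) : 0 ≤ cusp q y := by
  unfold cusp; split_ifs with hy
  exacts [rpow_nonneg hy.le q, le_rfl]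

lemma cusp_le_one {q y : ℝ} (hq : 0 ≤ q) (hy : y ≤ 1) : cusp q y ≤ 1 := by
  unfold cusp; split_ifs with hy'
  exacts [rpow_le_one hy'.le hy hq, zero_le_one]

lemma cusp_mul (q r y : ℝ) : cusp q y * cusp r y = cusp (q + r) y := by
  unfold cusp; split_ifs with hy
  exacts [(rpow_add hy q r).symm, zero_mul 0]

lemma cusp_sq (q y : ℝ) : cusp q y ^ 2 = cusp (2 * q) y := by
  rw [sq, cusp_mul, two_mul]

lemma measurable_cusp (q : ℝ) : Measurable (cusp q) :=
  Measurable.ite measurableSet_Ioi (measurable_id.pow_const q) measurable_const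

lemma fdp_eq_cusp (d : ℕ) (p : ℝ) :
    fdp d p = fun x => cusp p (∑ j, x j - (d - 1)) := by
  ext x
  unfold fdp cusp
  rcases eq_or_ne p 0 with rfl | hp
  · simp [sub_pos]
  · rcases lt_or_ge 0 (∑ j, x j - (d - 1)) with h | h
    · simp [hp, h, h.le]
    · simp [hp, h, h.not_gt, zero_rpow hp]

def unifUnit : Measure ℝ := volume.restrict (Set.Icc 0 1)

instance : IsProbabilityMeasure unifUnit := ⟨by simp [unifUnit]⟩

instance (d : ℕ) : IsProbabilityMeasure (unifCube d) :=
  inferInstanceAs (IsProbabilityMeasure (Measure.pi fun _ => unifUnit))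

lemma intervalIntegrable_cusp {q a b : ℝ} (hq : 0 ≤ q) (ha : a ≤ 1) (hb : b ≤ 1) :
    IntervalIntegrable (cusp q) volume a b := by
  rw [intervalIntegrable_iff]
  have : IsFiniteMeasure (volume.restrict (Set.uIoc a b)) := ⟨by simp⟩
  refine Integrable.of_bound (measurable_cusp q).aestronglyMeasurable 1 ?_
  filter_upwards [ae_restrict_mem measurableSet_uIoc] with t ht
  rw [norm_of_nonneg (cusp_nonneg q t)]
  exact cusp_le_one hq (ht.2.trans (max_le ha hb))

lemma integral_cusp_add {q a : ℝ} (hq : 0 ≤ q) (ha : a ≤ 0) :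
    ∫ t, cusp q (a + t) ∂unifUnit = cusp (q + 1) (a + 1) / (q + 1) := by
  rw [unifUnit, integral_Icc_eq_integral_Ioc, ← intervalIntegral.integral_of_le zero_le_one,
    intervalIntegral.integral_comp_add_left, add_zero]
  rcases le_or_gt (a + 1) 0 with h | h
  · rw [cusp_of_nonpos h, zero_div]
    refine intervalIntegral.integral_zero_ae (.of_forall fun t ht => cusp_of_nonpos ?_)
    rw [Set.uIoc_of_le (by linarith)] at ht
    exact ht.2.trans h
  have hvanish : ∫ t in a..0, cusp q t = 0 := by
    refine intervalIntegral.integral_zero_ae (.of_forall fun t ht => cusp_of_nonpos ?_)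
    rw [Set.uIoc_of_le ha] at ht
    exact ht.2
  have hpower : ∫ t in (0 : ℝ)..a + 1, cusp q t = ∫ t in (0 : ℝ)..a + 1, t ^ q := by
    refine intervalIntegral.integral_congr_ae (.of_forall fun t ht => cusp_of_pos ?_)
    rw [Set.uIoc_of_le h.le] at ht
    exact ht.1
  rw [← intervalIntegral.integral_add_adjacent_intervals
      (intervalIntegrable_cusp hq (by linarith) zero_le_one)
      (intervalIntegrable_cusp hq zero_le_one (by linarith)),
    hvanish, hpower, zero_add, integral_rpow (.inl (by linarith)),
    zero_rpow (by linarith), sub_zero, cusp_of_pos h]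

lemma variance_cusp_add {q a : ℝ} (hq : 0 ≤ q) (ha : a ≤ 0) :
    variance (fun t => cusp q (a + t)) unifUnit
      = cusp (2 * q + 1) (a + 1) / (2 * q + 1) - cusp (2 * (q + 1)) (a + 1) / (q + 1) ^ 2 := by
  have hg : MemLp (fun t => cusp q (a + t)) 2 unifUnit := by
    refine MemLp.of_bound ((measurable_cusp q).comp (by fun_prop)).aestronglyMeasurable 1 ?_
    filter_upwards [ae_restrict_mem measurableSet_Icc] with t ht
    rw [norm_of_nonneg (cusp_nonneg _ _)]
    exact cusp_le_one hq (by linarith [ht.2])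
  rw [variance_eq_sub hg]
  simp only [Pi.pow_apply, cusp_sq]
  rw [integral_cusp_add (by positivity) ha, integral_cusp_add hq ha, div_pow, cusp_sq]

lemma ae_mem_unitCube (d : ℕ) : ∀ᵐ x ∂unifCube d, ∀ j, x j ∈ Set.Icc (0 : ℝ) 1 :=
  ae_all_iff.2 fun j => (measurePreserving_eval (fun _ => unifUnit) j).quasiMeasurePreserving.ae
    (ae_restrict_mem measurableSet_Icc)

lemma sum_le_of_mem_unitCube {d : ℕ} {x : Fin d → ℝ}
    (hx : ∀ j, x j ∈ Set.Icc (0 : ℝ) 1) :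
    ∑ j, x j ≤ d := by
  simpa using Finset.sum_le_sum fun j (_ : j ∈ Finset.univ) => (hx j).2

lemma memLp_cusp_sum_sub {q : ℝ} (hq : 0 ≤ q) (d : ℕ) (r : ENNReal) :
    MemLp (fun x => cusp q (∑ j, x j - (d - 1))) r (unifCube d) := by
  refine MemLp.of_bound ((measurable_cusp q).comp (by fun_prop)).aestronglyMeasurable 1 ?_
  filter_upwards [ae_mem_unitCube d] with x hx
  rw [norm_of_nonneg (cusp_nonneg _ _)]
  exact cusp_le_one hq (by linarith [sum_le_of_mem_unitCube hx])

lemma measurePreserving_insertNth {n : ℕ} (j : Fin (n + 1)) :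
    MeasurePreserving (fun z : (Fin n → ℝ) × ℝ => j.insertNth z.2 z.1)
      ((unifCube n).prod unifUnit) (unifCube (n + 1)) := by
  have := (measurePreserving_piFinSuccAbove (fun _ : Fin (n + 1) => unifUnit) j).symm
  rw [MeasurableEquiv.piFinSuccAbove_symm_apply] at this
  exact this.comp Measure.measurePreserving_swap

lemma integral_unifCube_succ {n : ℕ} (j : Fin (n + 1)) {g : (Fin (n + 1) → ℝ) → ℝ}
    (hg : Integrable g (unifCube (n + 1))) :
    ∫ x, g x ∂unifCube (n + 1)
      = ∫ w, ∫ t, g (j.insertNth t w) ∂unifUnit ∂unifCube n := by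
  have h := measurePreserving_insertNth j
  rw [← h.map_eq, integral_map h.measurable.aemeasurable (h.map_eq ▸ hg.aestronglyMeasurable)]
  exact integral_prod _ (h.integrable_comp_of_integrable hg)

lemma sum_insertNth_sub {n : ℕ} (j : Fin (n + 1)) (t : ℝ) (w : Fin n → ℝ) :
    ∑ k, j.insertNth t w k - ((n + 1 : ℕ) - 1) = (∑ k, w k - n) + t := by
  rw [Fin.sum_insertNth]
  push_cast
  ring

def cuspMoment (q : ℝ) (d : ℕ) : ℝ := ∏ i ∈ Finset.range d, (q + i + 1)⁻¹

lemma cuspMoment_succ (q : ℝ) (n : ℕ) :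
    cuspMoment q (n + 1) = (q + 1)⁻¹ * cuspMoment (q + 1) n := by
  rw [cuspMoment, Finset.prod_range_succ', cuspMoment]
  push_cast
  ring_nf

lemma integral_cusp_sum_sub {q : ℝ} (hq : 0 ≤ q) (d : ℕ) :
    ∫ x, cusp q (∑ j, x j - (d - 1)) ∂unifCube d = cuspMoment q d := by
  induction d generalizing q with
  | zero => simp [cuspMoment, cusp_of_pos]
  | succ n ih =>
    rw [integral_unifCube_succ 0 ((memLp_cusp_sum_sub hq (n + 1) 1).integrable le_rfl)]
    simp only [sum_insertNth_sub]
    calc ∫ w, ∫ t, cusp q ((∑ k, w k - n) + t) ∂unifUnit ∂unifCube n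
        = ∫ w, (q + 1)⁻¹ * cusp (q + 1) (∑ k, w k - (n - 1)) ∂unifCube n := by
          refine integral_congr_ae ?_
          filter_upwards [ae_mem_unitCube n] with w hw
          rw [integral_cusp_add hq (by linarith [sum_le_of_mem_unitCube hw]), sub_add,
            inv_mul_eq_div]
      _ = cuspMoment q (n + 1) := by
          rw [integral_const_mul, ih (by linarith), cuspMoment_succ]

lemma measurePreserving_removeNth_eval {n : ℕ} (j : Fin (n + 1)) :
    MeasurePreserving (fun xz : (Fin (n + 1) → ℝ) × (Fin (n + 1) → ℝ) =>
        (j.removeNth xz.1, xz.1 j, xz.2 j))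
      ((unifCube (n + 1)).prod (unifCube (n + 1))) ((unifCube n).prod (unifUnit.prod unifUnit)) :=
  (measurePreserving_prodAssoc _ _ _).comp <|
    (Measure.measurePreserving_swap.prod (.id _)).comp <|
      (measurePreserving_piFinSuccAbove (fun _ => unifUnit) j).prod
        (measurePreserving_eval (fun _ => unifUnit) j)

theorem sobolTauU_eq_integral_variance {n : ℕ} {f : (Fin (n + 1) → ℝ) → ℝ}
    (hf : MemLp f 2 (unifCube (n + 1))) (j : Fin (n + 1)) :
    sobolTauU (n + 1) f j
      = ∫ w, variance (fun t => f (j.insertNth t w)) unifUnit ∂unifCube n := by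
  set F : (Fin n → ℝ) × ℝ → ℝ := fun z => f (j.insertNth z.2 z.1)
  have hF : MemLp F 2 ((unifCube n).prod unifUnit) :=
    hf.comp_measurePreserving (measurePreserving_insertNth j)
  have hu : MemLp (fun z : (Fin n → ℝ) × ℝ × ℝ => F (z.1, z.2.1)) 2
      ((unifCube n).prod (unifUnit.prod unifUnit)) :=
    hF.comp_measurePreserving ((MeasurePreserving.id _).prod measurePreserving_fst)
  have hv : MemLp (fun z : (Fin n → ℝ) × ℝ × ℝ => F (z.1, z.2.2)) 2
      ((unifCube n).prod (unifUnit.prod unifUnit)) :=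
    hF.comp_measurePreserving ((MeasurePreserving.id _).prod measurePreserving_snd)
  have hH : Integrable
      (fun z : (Fin n → ℝ) × ℝ × ℝ => (F (z.1, z.2.1) - F (z.1, z.2.2)) ^ 2)
      ((unifCube n).prod (unifUnit.prod unifUnit)) :=
    (hu.sub hv).integrable_sq
  have hΨ := measurePreserving_removeNth_eval j
  have hchange : ∫ xz, (f xz.1 - f (Function.update xz.1 j (xz.2 j))) ^ 2
        ∂(unifCube (n + 1)).prod (unifCube (n + 1))
      = ∫ z, (F (z.1, z.2.1) - F (z.1, z.2.2)) ^ 2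
          ∂(unifCube n).prod (unifUnit.prod unifUnit) := by
    rw [← hΨ.map_eq,
      integral_map hΨ.measurable.aemeasurable (hΨ.map_eq ▸ hH.aestronglyMeasurable)]
    simp only [F, Fin.insertNth_self_removeNth, Fin.insertNth_removeNth]
  have hslices : ∀ᵐ w ∂unifCube n, MemLp (fun t => F (w, t)) 2 unifUnit := by
    filter_upwards [hF.aestronglyMeasurable.prodMk_left, hF.integrable_sq.prod_right_ae]
      with w hmeas hsq
    exact (memLp_two_iff_integrable_sq hmeas).2 hsq
  rw [sobolTauU, hchange, integral_prod _ hH, ← integral_const_mul]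
  refine integral_congr_ae ?_
  filter_upwards [hslices] with w hw
  rw [integral_sub_sq_prod_self hw]
  ring

lemma memLp_fdp {p : ℝ} (hp : 0 ≤ p) (d : ℕ) : MemLp (fdp d p) 2 (unifCube d) := by
  rw [fdp_eq_cusp]
  exact memLp_cusp_sum_sub hp d 2

lemma variance_fdp {p : ℝ} (hp : 0 ≤ p) (d : ℕ) :
    variance (fdp d p) (unifCube d) = cuspMoment (2 * p) d - cuspMoment p d ^ 2 := by
  rw [variance_eq_sub (memLp_fdp hp d), fdp_eq_cusp]
  simp only [Pi.pow_apply, cusp_sq]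
  rw [integral_cusp_sum_sub (by positivity), integral_cusp_sum_sub hp]

lemma sobolTauU_fdp {p : ℝ} (hp : 0 ≤ p) (n : ℕ) (j : Fin (n + 1)) :
    sobolTauU (n + 1) (fdp (n + 1) p) j
      = cuspMoment (2 * p) (n + 1) - 2 / (p + 1) * cuspMoment (2 * p + 1) (n + 1) := by
  rw [sobolTauU_eq_integral_variance (memLp_fdp hp (n + 1)) j, fdp_eq_cusp]
  simp only [sum_insertNth_sub]
  have hcube (q : ℝ) (hq : 0 ≤ q) :
      Integrable (fun w => cusp q (∑ k, w k - (n - 1))) (unifCube n) :=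
    (memLp_cusp_sum_sub hq n 1).integrable le_rfl
  calc ∫ w, variance (fun t => cusp p ((∑ k, w k - n) + t)) unifUnit ∂unifCube n
      = ∫ w, (cusp (2 * p + 1) (∑ k, w k - (n - 1)) / (2 * p + 1)
          - cusp (2 * (p + 1)) (∑ k, w k - (n - 1)) / (p + 1) ^ 2) ∂unifCube n := by
        refine integral_congr_ae ?_
        filter_upwards [ae_mem_unitCube n] with w hw
        rw [variance_cusp_add hp (by linarith [sum_le_of_mem_unitCube hw]), sub_add]
    _ = cuspMoment (2 * p + 1) n / (2 * p + 1) - cuspMoment (2 * (p + 1)) n / (p + 1) ^ 2 := by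
        rw [integral_sub ((hcube _ (by positivity)).div_const _)
            ((hcube _ (by positivity)).div_const _),
          integral_div, integral_div, integral_cusp_sum_sub (by positivity),
          integral_cusp_sum_sub (by positivity)]
    _ = _ := by
        rw [cuspMoment_succ, cuspMoment_succ, show 2 * p + 1 + 1 = 2 * (p + 1) by ring]
        field_simp

lemma cuspMoment_pos {q : ℝ} (hq : -1 < q) (d : ℕ) : 0 < cuspMoment q d :=
  Finset.prod_pos fun i _ => inv_pos.2 (by linarith [i.cast_nonneg (α := ℝ)])

lemma cuspMoment_add_one_div {q : ℝ} (hq : -1 < q) (d : ℕ) :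
    cuspMoment (q + 1) d / cuspMoment q d = (q + 1) / (d + (q + 1)) := by
  induction d with
  | zero => simp [cuspMoment, (by linarith : q + 1 ≠ 0)]
  | succ d ih =>
    have h1 : (d : ℝ) + (q + 1) ≠ 0 := by linarith [d.cast_nonneg (α := ℝ)]
    have h2 : (d : ℝ) + 1 + (q + 1) ≠ 0 := by linarith [d.cast_nonneg (α := ℝ)]
    rw [cuspMoment, cuspMoment, Finset.prod_range_succ, Finset.prod_range_succ, mul_div_mul_comm,
      ← cuspMoment, ← cuspMoment, ih]
    push_cast
    rw [show q + 1 + d + 1 = d + 1 + (q + 1) by ring, show q + d + 1 = d + (q + 1) by ring]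
    field_simp

lemma sq_cuspMoment_div_le {p : ℝ} (hp : 0 ≤ p) (d : ℕ) :
    cuspMoment p d ^ 2 / cuspMoment (2 * p) d ≤ 2 ^ d / d.factorial := by
  have hfactor (i : ℕ) : (p + i + 1)⁻¹ ^ 2 / (2 * p + i + 1)⁻¹ ≤ 2 / (i + 1) := by
    rw [inv_pow, div_inv_eq_mul, inv_mul_eq_div, div_le_div_iff₀ (by positivity) (by positivity)]
    nlinarith [i.cast_nonneg (α := ℝ)]
  calc cuspMoment p d ^ 2 / cuspMoment (2 * p) d
      = ∏ i ∈ Finset.range d, (p + i + 1)⁻¹ ^ 2 / (2 * p + i + 1)⁻¹ := by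
        rw [cuspMoment, cuspMoment, ← Finset.prod_pow, ← Finset.prod_div_distrib]
    _ ≤ ∏ i ∈ Finset.range d, (2 / (i + 1) : ℝ) :=
        Finset.prod_le_prod (fun i _ => by positivity) fun i _ => hfactor i
    _ = 2 ^ d / d.factorial := by
        rw [Finset.prod_div_distrib, Finset.prod_const, Finset.card_range,
          ← Finset.prod_range_add_one_eq_factorial]
        push_cast
        rfl

lemma sq_cuspMoment_div_nonneg {p : ℝ} (hp : 0 ≤ p) (d : ℕ) :
    0 ≤ cuspMoment p d ^ 2 / cuspMoment (2 * p) d :=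
  div_nonneg (sq_nonneg _) (cuspMoment_pos (by linarith) d).le

lemma tendsto_natCast_mul_sq_cuspMoment_div {p : ℝ} (hp : 0 ≤ p) :
    Tendsto (fun d : ℕ => d * (cuspMoment p d ^ 2 / cuspMoment (2 * p) d)) atTop (nhds 0) := by
  refine squeeze_zero (fun d => mul_nonneg d.cast_nonneg (sq_cuspMoment_div_nonneg hp d))
    (fun d => ?_) (FloorSemiring.tendsto_pow_div_factorial_atTop 4)
  calc (d : ℝ) * (cuspMoment p d ^ 2 / cuspMoment (2 * p) d)
      ≤ 2 ^ d * (2 ^ d / d.factorial) :=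
        mul_le_mul (by exact_mod_cast Nat.lt_two_pow_self.le) (sq_cuspMoment_div_le hp d)
          (sq_cuspMoment_div_nonneg hp d) (by positivity)
    _ = 4 ^ d / d.factorial := by
        rw [← mul_div_assoc, ← mul_pow]
        norm_num

lemma tendsto_sq_cuspMoment_div {p : ℝ} (hp : 0 ≤ p) :
    Tendsto (fun d : ℕ => cuspMoment p d ^ 2 / cuspMoment (2 * p) d) atTop (nhds 0) := by
  refine squeeze_zero' (.of_forall (sq_cuspMoment_div_nonneg hp)) ?_
    (tendsto_natCast_mul_sq_cuspMoment_div hp)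
  filter_upwards [eventually_ge_atTop 1] with d hd
  exact le_mul_of_one_le_left (sq_cuspMoment_div_nonneg hp d) (by exact_mod_cast hd)

lemma sub_meanDimU_fdp {p : ℝ} (hp : 0 ≤ p) (n : ℕ)
    (hR : cuspMoment p (n + 1) ^ 2 / cuspMoment (2 * p) (n + 1) ≠ 1) :
    ((n + 1 : ℕ) : ℝ) - meanDimU (n + 1) (fdp (n + 1) p)
      = ((4 * p + 2) / (p + 1) * ((n + 1 : ℕ) / ((n + 1 : ℕ) + (2 * p + 1)))
          - (n + 1 : ℕ) * (cuspMoment p (n + 1) ^ 2 / cuspMoment (2 * p) (n + 1)))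
        / (1 - cuspMoment p (n + 1) ^ 2 / cuspMoment (2 * p) (n + 1)) := by
  have hA := cuspMoment_pos (by linarith : (-1 : ℝ) < 2 * p) (n + 1)
  have hB := cuspMoment_add_one_div (by linarith : (-1 : ℝ) < 2 * p) (n + 1)
  rw [meanDimU, variance_fdp hp, Finset.sum_congr rfl fun j _ => sobolTauU_fdp hp n j,
    Finset.sum_const, Finset.card_univ, Fintype.card_fin, nsmul_eq_mul]
  rw [div_eq_iff hA.ne'] at hB
  rw [hB]
  have hvar : cuspMoment (2 * p) (n + 1) - cuspMoment p (n + 1) ^ 2 ≠ 0 := by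
    intro h
    exact hR (by rw [div_eq_one_iff_eq hA.ne']; linarith)
  have hR' : 1 - cuspMoment p (n + 1) ^ 2 / cuspMoment (2 * p) (n + 1) ≠ 0 :=
    sub_ne_zero.2 hR.symm
  field_simp
  ring

end MeanDimCusp

open MeanDimCusp

/-- For fixed `p ≥ 0`, `lim_{d→∞} (d − ν(f_{d,p})) = (4p+2)/(p+1)`. -/
theorem stmt14 (p : ℝ) (hp : 0 ≤ p) :
    Tendsto (fun d : ℕ => (d : ℝ) - meanDimU d (fdp d p))
      atTop (nhds ((4 * p + 2) / (p + 1))) := by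
  have hR := tendsto_sq_cuspMoment_div hp
  have hlim := (((tendsto_natCast_div_add_atTop (2 * p + 1)).const_mul ((4 * p + 2) / (p + 1))).sub
    (tendsto_natCast_mul_sq_cuspMoment_div hp)).div (tendsto_const_nhds.sub hR)
    (by norm_num : (1 : ℝ) - 0 ≠ 0)
  rw [mul_one, sub_zero, sub_zero, div_one] at hlim
  refine hlim.congr' ?_
  filter_upwards [eventually_ge_atTop 1, hR.eventually_ne zero_ne_one] with d hd hRd
  obtain ⟨n, rfl⟩ := Nat.exists_eq_add_of_le' hd
  exact (sub_meanDimU_fdp hp n hRd).symm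

end
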